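/- arXiv:1508.03835 — 2 statements merged into one kernel-verified Lean document; each statement's English description precedes it below -/
import Mathlib

section
/- Let Γ be a distance mean-regular graph. If ā_i = 0 for all i < m and ā_m ≠ 0, then the shortest odd cycle of Γ has length 2m+1 (the odd-girth of Γ is 2m+1). -/
open Finset

attribute [local instance] Classical.propDecidable

variable {V : Type*}

/-- The set of vertices at distance `i` from `u`. -/
noncomputable def SimpleGraph.distSphere [Fintype V] (G : SimpleGraph V) (u : V) (i : ℕ) :
    Finset V :=
  Finset.univ.filter fun v => G.dist u v = i

/-- The averaged intersection number `p̄_{ij}^h(u)`: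
the average over `v ∈ Γ_h(u)` of `|Γ_i(u) ∩ Γ_j(v)|`. -/
noncomputable def SimpleGraph.pbar [Fintype V] (G : SimpleGraph V) (u : V) (h i j : ℕ) : ℚ :=
  (∑ v ∈ G.distSphere u h, ((G.distSphere u i ∩ G.distSphere v j).card : ℚ)) /
    ((G.distSphere u h).card : ℚ)

/-- `Γ` is distance mean-regular (with diameter `D`) if all the averaged intersection
numbers `p̄_{ij}^h(u)` for `h,i,j ≤ D` are independent of the vertex `u`. -/
def SimpleGraph.DMR [Fintype V] (G : SimpleGraph V) (D : ℕ) : Prop :=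
  ∀ h i j : ℕ, h ≤ D → i ≤ D → j ≤ D → ∀ u u' : V, G.pbar u h i j = G.pbar u' h i j

/-- `ā_h(u) = p̄_{1h}^h(u)`: average over `v ∈ Γ_h(u)` of `|Γ_h(u) ∩ Γ_1(v)|`. -/
noncomputable def SimpleGraph.abar [Fintype V] (G : SimpleGraph V) (u : V) (h : ℕ) : ℚ :=
  G.pbar u h h 1

/-- `b̄_h(u) = p̄_{1,h+1}^h(u)`: average over `v ∈ Γ_h(u)` of `|Γ_{h+1}(u) ∩ Γ_1(v)|`. -/
noncomputable def SimpleGraph.bbar [Fintype V] (G : SimpleGraph V) (u : V) (h : ℕ) : ℚ :=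
  G.pbar u h (h + 1) 1

/-- `c̄_h(u) = p̄_{1,h-1}^h(u)`: average over `v ∈ Γ_h(u)` of `|Γ_{h-1}(u) ∩ Γ_1(v)|`.
(For `h = 0` this value is `0`, matching the convention `c̄₀ = 0`.) -/
noncomputable def SimpleGraph.cbar [Fintype V] (G : SimpleGraph V) (u : V) (h : ℕ) : ℚ :=
  G.pbar u h (h - 1) 1

section Aux

open SimpleGraph SimpleGraph.Walk List

/-- Splitting a closed walk that revisits its base point into two nontrivial closed walks. -/
lemma split_closed' [DecidableEq V] {G : SimpleGraph V} {v : V} (w : G.Walk v v)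
    (h2 : 2 ≤ w.support.tail.count v) :
    ∃ (c r : G.Walk v v), 0 < c.length ∧ 0 < r.length ∧ c.length + r.length = w.length := by
  cases w with
  | nil => simp at h2
  | @cons _ y _ h q =>
    have hv : v ∈ q.support := q.end_mem_support
    refine ⟨Walk.cons h (q.takeUntil v hv), q.dropUntil v hv, by simp, ?_, ?_⟩
    · have hsupp : q.support = (q.takeUntil v hv).support ++ (q.dropUntil v hv).support.tail := by
        conv_lhs => rw [← q.take_spec hv]
        exact Walk.support_append _ _
      have h2' : 2 ≤ q.support.count v := by
        simpa [Walk.support_cons] using h2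
      rw [hsupp, List.count_append, q.count_support_takeUntil_eq_one hv] at h2'
      have hne : (q.dropUntil v hv).support.tail ≠ [] := by
        intro hnil; rw [hnil] at h2'; simp at h2'
      have hlen : 0 < (q.dropUntil v hv).support.tail.length := List.length_pos_iff.mpr hne
      rw [List.length_tail, Walk.length_support] at hlen
      omega
    · have hsum := congrArg Walk.length (q.take_spec hv)
      rw [Walk.length_append] at hsum
      simp only [Walk.length_cons]
      omega

/-- An edge of a path joining its two endpoints forces the path to have length 1. -/
lemma path_edge_endpoints' {G : SimpleGraph V} :
    ∀ {a b : V} (p : G.Walk a b), p.IsPath → s(b, a) ∈ p.edges → p.length = 1 := by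
  intro a b p
  induction p with
  | nil => simp
  | @cons a c b h p ih =>
    intro hp he
    rw [Walk.edges_cons, List.mem_cons] at he
    rcases he with he | he
    · rw [Sym2.eq_iff] at he
      rcases he with ⟨hba, hac⟩ | ⟨hbc, -⟩
      · exact absurd hac h.ne
      · subst hbc
        have : p = Walk.nil := by
          have hp' : p.IsPath := hp.of_cons
          have := SimpleGraph.Path.loop_eq (⟨p, hp'⟩ : G.Path b b)
          simpa [SimpleGraph.Path.nil] using congrArg Subtype.val this
        simp [this]
    · exfalso
      have : a ∈ p.support := p.snd_mem_support_of_mem_edges (by rwa [Sym2.eq_swap] at he)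
      have := hp.support_nodup
      rw [Walk.support_cons, List.nodup_cons] at this
      exact this.1 ‹a ∈ p.support›

/-- Every closed walk of odd length contains an odd cycle of at most the same length. -/
lemma exists_odd_cycle' {G : SimpleGraph V} :
    ∀ (n : ℕ) (v : V) (w : G.Walk v v), w.length ≤ n → Odd w.length →
      ∃ (x : V) (c : G.Walk x x), c.IsCycle ∧ Odd c.length ∧ c.length ≤ w.length := by
  classical
  intro n
  induction n with
  | zero =>
    intro v w hl ho
    interval_cases h : w.length
    · simp at ho
  | succ n ih =>
    intro v w hl ho
    by_cases hsplit : 2 ≤ w.support.tail.count v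
    · obtain ⟨c, r, hc, hr, hsum⟩ := split_closed' w hsplit
      have : Odd c.length ∨ Odd r.length := by
        rcases Nat.even_or_odd c.length with h | h
        · right; rcases Nat.even_or_odd r.length with h' | h'
          · exfalso; rw [← hsum] at ho
            exact Nat.not_odd_iff_even.mpr (Nat.even_add.mpr (by tauto)) ho
          · exact h'
        · left; exact h
      rcases this with h | h
      · obtain ⟨x, c', hc1, hc2, hc3⟩ := ih v c (by omega) h
        exact ⟨x, c', hc1, hc2, by omega⟩
      · obtain ⟨x, c', hc1, hc2, hc3⟩ := ih v r (by omega) h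
        exact ⟨x, c', hc1, hc2, by omega⟩
    · by_cases hnd : w.support.tail.Nodup
      · cases w with
        | nil => simp at ho
        | @cons _ y _ h q =>
          have hq : q.IsPath := Walk.IsPath.mk' (by simpa [Walk.support_cons] using hnd)
          refine ⟨v, Walk.cons h q, ?_, ho, le_refl _⟩
          rw [Walk.cons_isCycle_iff]
          refine ⟨hq, fun he => ?_⟩
          have : q.length = 1 := path_edge_endpoints' q hq he
          rw [Walk.length_cons, this] at ho
          simp [Nat.odd_iff] at ho
      · obtain ⟨y, hy⟩ : ∃ y, ¬ w.support.tail.count y ≤ 1 := by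
          by_contra hall
          push_neg at hall
          exact hnd (List.nodup_iff_count_le_one.mpr fun a => (hall a))
        have hymem : y ∈ w.support := by
          have : y ∈ w.support.tail := List.count_pos_iff.mp (by omega)
          exact List.mem_of_mem_tail this
        set w2 := w.rotate y hymem with hw2
        have hlen2 : w2.length = w.length := by
          have := congrArg Walk.length (w.take_spec hymem)
          rw [Walk.length_append] at this
          rw [hw2, Walk.rotate, Walk.length_append]
          omega
        have hcount2 : 2 ≤ w2.support.tail.count y := by
          have hperm := (w.support_rotate y hymem).perm
          rw [hperm.count_eq]
          omega
        obtain ⟨c, r, hc, hr, hsum⟩ := split_closed' w2 hcount2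
        have hsum' : c.length + r.length = w.length := by omega
        have : Odd c.length ∨ Odd r.length := by
          rcases Nat.even_or_odd c.length with h | h
          · right; rcases Nat.even_or_odd r.length with h' | h'
            · exfalso; rw [← hsum'] at ho
              exact Nat.not_odd_iff_even.mpr (Nat.even_add.mpr (by tauto)) ho
            · exact h'
          · left; exact h
        rcases this with h | h
        · obtain ⟨x, c', hc1, hc2, hc3⟩ := ih y c (by omega) h
          exact ⟨x, c', hc1, hc2, by omega⟩
        · obtain ⟨x, c', hc1, hc2, hc3⟩ := ih y r (by omega) h
          exact ⟨x, c', hc1, hc2, by omega⟩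

/-- Parity of distance along a walk all of whose steps change the distance to `u`. -/
lemma parity_walk' {G : SimpleGraph V} (hconn : G.Connected) (u : V) :
    ∀ {a b : V} (p : G.Walk a b),
      (∀ d ∈ p.darts, G.dist u d.fst ≠ G.dist u d.snd) →
      (G.dist u a + p.length) % 2 = G.dist u b % 2 := by
  intro a b p
  induction p with
  | nil => simp
  | @cons a c b h q ih =>
    intro hd
    have h1 : G.dist u a ≠ G.dist u c := hd ⟨(a, c), h⟩ (by simp [Walk.darts_cons])
    have t1 : G.dist u c ≤ G.dist u a + 1 := by
      have ht := hconn.dist_triangle (u := u) (v := a) (w := c)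
      have hac : G.dist a c = 1 := SimpleGraph.dist_eq_one_iff_adj.mpr h
      omega
    have t2 : G.dist u a ≤ G.dist u c + 1 := by
      have ht := hconn.dist_triangle (u := u) (v := c) (w := a)
      have hca : G.dist c a = 1 := SimpleGraph.dist_eq_one_iff_adj.mpr h.symm
      omega
    have hih := ih (fun d hd' => hd d (by simp [Walk.darts_cons, hd']))
    rw [Walk.length_cons]
    omega

/-- A vertex on a closed walk is within half the walk's length of the base point. -/
lemma dist_le_half' {G : SimpleGraph V} {u x : V} (w : G.Walk u u) (hx : x ∈ w.support) :
    2 * G.dist u x ≤ w.length := by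
  classical
  have h1 : G.dist u x ≤ (w.takeUntil x hx).length := SimpleGraph.dist_le _
  have h2 : G.dist x u ≤ (w.dropUntil x hx).length := SimpleGraph.dist_le _
  have hsum := congrArg Walk.length (w.take_spec hx)
  rw [Walk.length_append] at hsum
  rw [SimpleGraph.dist_comm] at h2
  omega

lemma mem_distSphere' [Fintype V] (G : SimpleGraph V) {u x : V} {i : ℕ} :
    x ∈ G.distSphere u i ↔ G.dist u x = i := by
  simp [SimpleGraph.distSphere]

/-- If `abar u h ≠ 0` then there is an edge within the sphere of radius `h` around `u`. -/
lemma abar_edge' [Fintype V] (G : SimpleGraph V) {u : V} {h : ℕ} (hne : G.abar u h ≠ 0) :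
    ∃ v w : V, G.dist u v = h ∧ G.dist u w = h ∧ G.Adj v w := by
  by_contra hno
  push_neg at hno
  apply hne
  unfold SimpleGraph.abar SimpleGraph.pbar
  rw [Finset.sum_eq_zero, zero_div]
  intro v hv
  rw [mem_distSphere'] at hv
  norm_cast
  rw [Finset.card_eq_zero, Finset.eq_empty_iff_forall_notMem]
  intro x hx
  rw [Finset.mem_inter, mem_distSphere', mem_distSphere'] at hx
  exact hno v x hv hx.1 (SimpleGraph.dist_eq_one_iff_adj.mp hx.2)

/-- Conversely, an edge within the sphere of radius `h` around `u` makes `abar u h` nonzero. -/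
lemma abar_ne_zero' [Fintype V] (G : SimpleGraph V) {u v w : V} {h : ℕ}
    (hv : G.dist u v = h) (hw : G.dist u w = h) (hadj : G.Adj v w) :
    G.abar u h ≠ 0 := by
  unfold SimpleGraph.abar SimpleGraph.pbar
  have hvmem : v ∈ G.distSphere u h := (mem_distSphere' G).mpr hv
  have hcard : (0 : ℚ) < ((G.distSphere u h).card : ℚ) := by
    have : 0 < (G.distSphere u h).card := Finset.card_pos.mpr ⟨v, hvmem⟩
    exact_mod_cast this
  have hsum : (0 : ℚ) <
      ∑ x ∈ G.distSphere u h, ((G.distSphere u h ∩ G.distSphere x 1).card : ℚ) := by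
    apply Finset.sum_pos' (fun x _ => by positivity)
    refine ⟨v, hvmem, ?_⟩
    have hmem : w ∈ G.distSphere u h ∩ G.distSphere v 1 := by
      rw [Finset.mem_inter, mem_distSphere', mem_distSphere']
      exact ⟨hw, SimpleGraph.dist_eq_one_iff_adj.mpr hadj⟩
    have : 0 < (G.distSphere u h ∩ G.distSphere v 1).card := Finset.card_pos.mpr ⟨w, hmem⟩
    exact_mod_cast this
  exact ne_of_gt (div_pos hsum hcard)

end Aux

/-- If `Γ` is distance mean-regular with `ā_i = 0` for all `i < m` and `ā_m ≠ 0`,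
then the odd-girth of `Γ` is `2m + 1`. -/
theorem stmt4 [Fintype V] (G : SimpleGraph V) (hconn : G.Connected) (D : ℕ)
    (hd : ∀ x y : V, G.dist x y ≤ D) (hd' : ∃ x y : V, G.dist x y = D)
    (hdmr : G.DMR D) (m : ℕ) (hm : m ≤ D)
    (h1 : ∀ u : V, ∀ i : ℕ, i < m → G.abar u i = 0)
    (h2 : ∀ u : V, G.abar u m ≠ 0) :
    (∃ (v : V) (w : G.Walk v v), w.IsCycle ∧ w.length = 2 * m + 1) ∧
    (∀ (v : V) (w : G.Walk v v), w.IsCycle → Odd w.length → 2 * m + 1 ≤ w.length) := by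
  classical
  have key : ∀ (v : V) (w : G.Walk v v), w.IsCycle → Odd w.length → 2 * m + 1 ≤ w.length := by
    intro v w hcyc hodd
    by_contra hlt
    push_neg at hlt
    obtain ⟨k, hk⟩ := hodd
    -- find a dart whose endpoints are equidistant from v
    have hdart : ∃ d ∈ w.darts, G.dist v d.fst = G.dist v d.snd := by
      by_contra hall
      push_neg at hall
      have hp := parity_walk' hconn v w hall
      rw [SimpleGraph.dist_self] at hp
      omega
    obtain ⟨d, hd0, heq⟩ := hdart
    have hfst : d.fst ∈ w.support := w.dart_fst_mem_support_of_mem_darts hd0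
    have h2h : 2 * G.dist v d.fst ≤ w.length := dist_le_half' w hfst
    have hltm : G.dist v d.fst < m := by omega
    exact abar_ne_zero' G rfl heq.symm d.adj (h1 v _ hltm)
  refine ⟨?_, key⟩
  obtain ⟨u⟩ := hconn.nonempty
  obtain ⟨v0, w0, hv0, hw0, hadj⟩ := abar_edge' G (h2 u)
  obtain ⟨p, hp⟩ := (hconn.preconnected u v0).exists_walk_length_eq_dist
  obtain ⟨q, hq⟩ := (hconn.preconnected w0 u).exists_walk_length_eq_dist
  rw [SimpleGraph.dist_comm] at hq
  set W : G.Walk u u := p.append (SimpleGraph.Walk.cons hadj q) with hW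
  have hWlen : W.length = 2 * m + 1 := by
    rw [hW, SimpleGraph.Walk.length_append, SimpleGraph.Walk.length_cons, hp, hq, hv0, hw0]
    ring
  have hWodd : Odd W.length := by rw [hWlen]; exact ⟨m, by ring⟩
  obtain ⟨x, c, hc1, hc2, hc3⟩ := exists_odd_cycle' W.length u W le_rfl hWodd
  exact ⟨x, c, hc1, le_antisymm (by omega) (key x c hc1 hc2)⟩
end

section
/- In a distance mean-regular graph, the intersection mean-numbers are symmetric: p̄_{ij}^h = p̄_{ji}^h for all h,i,j ∈ {0,…,D}. -/
open Finset

attribute [local instance] Classical.propDecidable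

variable {V : Type*}

lemma pbar_num [Fintype V] (G : SimpleGraph V) (u : V) (h i j : ℕ) :
    (∑ v ∈ G.distSphere u h, ((G.distSphere u i ∩ G.distSphere v j).card : ℚ))
      = ∑ v : V, ∑ w : V,
          (if G.dist u v = h ∧ G.dist u w = i ∧ G.dist v w = j then (1 : ℚ) else 0) := by
  rw [SimpleGraph.distSphere, Finset.sum_filter]
  refine Finset.sum_congr rfl fun v _ => ?_
  split_ifs with hv
  · have e : (G.distSphere u i ∩ G.distSphere v j)
        = Finset.univ.filter (fun w => G.dist u w = i ∧ G.dist v w = j) := by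
      ext w; simp [SimpleGraph.distSphere]
    rw [e, Finset.card_filter]
    push_cast
    refine Finset.sum_congr rfl fun w _ => ?_
    simp [hv]
  · symm
    refine Finset.sum_eq_zero fun w _ => by simp [hv]

lemma aux_sum [Fintype V] (G : SimpleGraph V) (h i j : ℕ) :
    (∑ u : V, ∑ v : V, ∑ w : V,
        (if G.dist u v = h ∧ G.dist u w = i ∧ G.dist v w = j then (1 : ℚ) else 0))
      = ∑ u : V, ∑ v : V, ∑ w : V,
          (if G.dist u v = h ∧ G.dist u w = j ∧ G.dist v w = i then (1 : ℚ) else 0) := by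
  rw [Finset.sum_comm]
  refine Finset.sum_congr rfl fun u _ => Finset.sum_congr rfl fun v _ =>
    Finset.sum_congr rfl fun w _ => ?_
  refine if_congr ?_ rfl rfl
  rw [show G.dist v u = G.dist u v from SimpleGraph.dist_comm]
  tauto

lemma pbar_zero [Fintype V] (G : SimpleGraph V) (hconn : G.Connected) (u : V) (k : ℕ) :
    G.pbar u 0 k k = ((G.distSphere u k).card : ℚ) := by
  have e : G.distSphere u 0 = {u} := by
    ext v
    simp only [SimpleGraph.distSphere, Finset.mem_filter, Finset.mem_univ, true_and,
      Finset.mem_singleton]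
    constructor
    · intro hv
      exact ((hconn u v).dist_eq_zero_iff.mp hv).symm
    · rintro rfl; exact SimpleGraph.dist_self
  simp [SimpleGraph.pbar, e]

/-- In a distance mean-regular graph the intersection mean-numbers are symmetric:
`p̄_{ij}^h = p̄_{ji}^h` for all `h,i,j ∈ {0,…,D}`. -/
theorem stmt13 [Fintype V] (G : SimpleGraph V) (hconn : G.Connected) (D : ℕ)
    (hd : ∀ x y : V, G.dist x y ≤ D) (hd' : ∃ x y : V, G.dist x y = D)
    (hdmr : G.DMR D) :
    ∀ h i j : ℕ, h ≤ D → i ≤ D → j ≤ D → ∀ u : V,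
      G.pbar u h i j = G.pbar u h j i := by
  intro h i j hh hi hj u
  by_cases hk : (G.distSphere u h).card = 0
  · simp [SimpleGraph.pbar, hk]
  · have hkQ : ((G.distSphere u h).card : ℚ) ≠ 0 := Nat.cast_ne_zero.mpr hk
    have hcard : ∀ u' : V, ((G.distSphere u' h).card : ℚ) = ((G.distSphere u h).card : ℚ) := by
      intro u'
      have := hdmr 0 h h (Nat.zero_le D) hh hh u' u
      rwa [pbar_zero G hconn, pbar_zero G hconn] at this
    have h1 : ∀ (a b : ℕ), a ≤ D → b ≤ D → ∀ u' : V,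
        (∑ v ∈ G.distSphere u' h, ((G.distSphere u' a ∩ G.distSphere v b).card : ℚ))
          = G.pbar u h a b * ((G.distSphere u h).card : ℚ) := by
      intro a b ha hb u'
      have hkQ' : ((G.distSphere u' h).card : ℚ) ≠ 0 := by rw [hcard u']; exact hkQ
      rw [hdmr h a b hh ha hb u u', ← hcard u', SimpleGraph.pbar, div_mul_cancel₀ _ hkQ']
    have key := aux_sum G h i j
    simp only [← pbar_num] at key
    rw [Finset.sum_congr rfl (fun u' _ => h1 i j hi hj u'),
      Finset.sum_congr rfl (fun u' _ => h1 j i hj hi u'),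
      Finset.sum_const, Finset.sum_const, nsmul_eq_mul, nsmul_eq_mul] at key
    have hn : ((Finset.univ : Finset V).card : ℚ) ≠ 0 :=
      Nat.cast_ne_zero.mpr (Finset.card_ne_zero.mpr ⟨u, Finset.mem_univ u⟩)
    exact mul_right_cancel₀ hkQ (mul_left_cancel₀ hn key)
end
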